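/- arXiv:2504.21636 — 4 statements merged into one kernel-verified Lean document; each statement's English description precedes it below -/
import Mathlib

section
/- Let n ≥ 1 and define the n-qubit Jordan–Wigner annihilation operators a_i := Z^{⊗i} ⊗ σ⁻ ⊗ I^{⊗(n−1−i)} (σ⁻ = !![0,1;0,0]) as 2^n × 2^n complex matrices. Then the a_i satisfy the canonical anticommutation relations: a_i a_j + a_j a_i = 0 and (a_i)† a_j + a_j (a_i)† = δ_{ij} I for all i, j ∈ {0,…,n−1}, where (a_i)† is the conjugate transpose. -/
/-!
Tensor products multiply sitewise, so if the factors of two tensor products commute at every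
site but one, their anticommutator is the tensor product in which that site carries the
anticommutator of its two factors and every other site the product of its two factors.
For `i < j` the factors of `a_i` (or `a_i†`) and `a_j` at site `i` are `σ⁻` (or `σ⁺`) and `Z`,
which anticommute, so the anticommutator vanishes. For `i = j` every other site carries `Z² = 1`
or `1`, and site `i` carries `σ⁻σ⁻ + σ⁻σ⁻ = 0` or `σ⁺σ⁻ + σ⁻σ⁺ = 1`.
-/

open Matrix Finset
open scoped symmDiff

namespace FQ

/-- Pauli X. -/
noncomputable def X : Matrix (ZMod 2) (ZMod 2) ℂ := !![0, 1; 1, 0]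

/-- Pauli Y. -/
noncomputable def Y : Matrix (ZMod 2) (ZMod 2) ℂ := !![0, -Complex.I; Complex.I, 0]

/-- Pauli Z. -/
noncomputable def Z : Matrix (ZMod 2) (ZMod 2) ℂ := !![1, 0; 0, -1]

/-- Tensor product `M 0 ⊗ M 1 ⊗ ⋯ ⊗ M (n-1)` of a family of single-qubit operators, as a
`2^n × 2^n` matrix indexed by functions `Fin n → ZMod 2`
(the identification of `(ℂ²)^⊗n` with `ℂ^(2^n)`). -/
noncomputable def tens {n : ℕ} (M : Fin n → Matrix (ZMod 2) (ZMod 2) ℂ) :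
    Matrix (Fin n → ZMod 2) (Fin n → ZMod 2) ℂ :=
  Matrix.of fun f g => ∏ i, M i (f i) (g i)

/-- The lowering operator `σ⁻ = (X + iY)/2`. -/
noncomputable def σm : Matrix (ZMod 2) (ZMod 2) ℂ := !![0, 1; 0, 0]

/-- The `n`-qubit Jordan–Wigner annihilation operators: `ann n i = Z^⊗i ⊗ σ⁻ ⊗ I^⊗(n-1-i)`. -/
noncomputable def ann (n i : ℕ) : Matrix (Fin n → ZMod 2) (Fin n → ZMod 2) ℂ :=
  tens fun j => if (j : ℕ) < i then Z else if (j : ℕ) = i then σm else 1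

lemma sum_zmod_two {M : Type*} [AddCommMonoid M] (f : ZMod 2 → M) : ∑ x, f x = f 0 + f 1 :=
  Fin.sum_univ_two f

lemma forall_zmod_two {P : ZMod 2 → Prop} : (∀ x, P x) ↔ P 0 ∧ P 1 := Fin.forall_fin_two

lemma Z_apply : Z 0 0 = 1 ∧ Z 0 1 = 0 ∧ Z 1 0 = 0 ∧ Z 1 1 = -1 := ⟨rfl, rfl, rfl, rfl⟩

lemma σm_apply : σm 0 0 = 0 ∧ σm 0 1 = 1 ∧ σm 1 0 = 0 ∧ σm 1 1 = 0 := ⟨rfl, rfl, rfl, rfl⟩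

lemma Z_conjTranspose : Zᴴ = Z := by
  ext i j; revert i j
  simp [forall_zmod_two, Z_apply]

lemma Z_mul_self : Z * Z = 1 := by
  ext i j; revert i j
  simp [forall_zmod_two, sum_zmod_two, mul_apply, one_apply, Z_apply]

lemma σm_mul_self : σm * σm = 0 := by
  ext i j; revert i j
  simp [forall_zmod_two, sum_zmod_two, mul_apply, σm_apply]

lemma σm_mul_Z_add_Z_mul_σm : σm * Z + Z * σm = 0 := by
  ext i j; revert i j
  simp [forall_zmod_two, sum_zmod_two, mul_apply, σm_apply, Z_apply]

lemma σm_conjTranspose_mul_Z_add_Z_mul_σm_conjTranspose : σmᴴ * Z + Z * σmᴴ = 0 := by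
  simpa [Z_conjTranspose, add_comm] using congrArg conjTranspose σm_mul_Z_add_Z_mul_σm

lemma σm_conjTranspose_mul_σm_add_σm_mul_σm_conjTranspose : σmᴴ * σm + σm * σmᴴ = 1 := by
  ext i j; revert i j
  simp [forall_zmod_two, sum_zmod_two, mul_apply, one_apply, σm_apply]

section tens

variable {n : ℕ}

lemma tens_mul (M N : Fin n → Matrix (ZMod 2) (ZMod 2) ℂ) : tens M * tens N = tens (M * N) := by
  ext f g
  simp only [tens, of_apply, mul_apply, Pi.mul_apply, Finset.prod_univ_sum,
    Fintype.piFinset_univ, Finset.prod_mul_distrib]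

lemma tens_conjTranspose (M : Fin n → Matrix (ZMod 2) (ZMod 2) ℂ) :
    (tens M)ᴴ = tens fun i => (M i)ᴴ := by
  ext f g
  simp [tens, conjTranspose_apply]

lemma tens_one : tens (1 : Fin n → Matrix (ZMod 2) (ZMod 2) ℂ) = 1 := by
  ext f g
  by_cases hfg : f = g
  · subst hfg
    simp [tens]
  · obtain ⟨i, hi⟩ := Function.ne_iff.mp hfg
    have hi' : (1 : Matrix (ZMod 2) (ZMod 2) ℂ) (f i) (g i) = 0 := one_apply_ne hi
    simpa [tens, one_apply_ne hfg] using Finset.prod_eq_zero (Finset.mem_univ i) hi'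

lemma tens_eq_zero_of_eq_zero {M : Fin n → Matrix (ZMod 2) (ZMod 2) ℂ} {i : Fin n}
    (hM : M i = 0) : tens M = 0 := by
  ext f g
  exact Finset.prod_eq_zero (Finset.mem_univ i) (by simp [hM])

lemma tens_update_apply (M : Fin n → Matrix (ZMod 2) (ZMod 2) ℂ) (i : Fin n)
    (A : Matrix (ZMod 2) (ZMod 2) ℂ) (f g : Fin n → ZMod 2) :
    tens (Function.update M i A) f g = A (f i) (g i) * ∏ k ∈ {i}ᶜ, M k (f k) (g k) := by
  rw [tens, of_apply, Fintype.prod_eq_mul_prod_compl i, Function.update_self]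
  congr 1
  refine Finset.prod_congr rfl fun k hk => ?_
  rw [Function.update_of_ne (by simpa using hk)]

lemma tens_update_add (M : Fin n → Matrix (ZMod 2) (ZMod 2) ℂ) (i : Fin n)
    (A B : Matrix (ZMod 2) (ZMod 2) ℂ) :
    tens (Function.update M i (A + B)) =
      tens (Function.update M i A) + tens (Function.update M i B) := by
  ext f g
  simp only [Matrix.add_apply, tens_update_apply, add_mul]

lemma tens_mul_add_tens_mul {M N : Fin n → Matrix (ZMod 2) (ZMod 2) ℂ} {i : Fin n}
    (hc : ∀ k, k ≠ i → Commute (M k) (N k)) :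
    tens M * tens N + tens N * tens M =
      tens (Function.update (M * N) i (M i * N i + N i * M i)) := by
  have hNM : Function.update (M * N) i (N i * M i) = N * M := by
    funext k
    rcases eq_or_ne k i with rfl | hk
    · simp
    · simp [Function.update_of_ne hk, (hc k hk).eq]
  rw [tens_update_add, hNM, ← Pi.mul_apply M N i, Function.update_eq_self, tens_mul, tens_mul]

end tens

noncomputable def jwString (n i : ℕ) (A : Matrix (ZMod 2) (ZMod 2) ℂ) :
    Matrix (Fin n → ZMod 2) (Fin n → ZMod 2) ℂ :=
  tens fun j => if (j : ℕ) < i then Z else if (j : ℕ) = i then A else 1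

lemma ann_eq_jwString (n i : ℕ) : ann n i = jwString n i σm := rfl

lemma jwString_conjTranspose (n i : ℕ) (A : Matrix (ZMod 2) (ZMod 2) ℂ) :
    (jwString n i A)ᴴ = jwString n i Aᴴ := by
  rw [jwString, jwString, tens_conjTranspose]
  congr 1
  funext j
  split_ifs <;> simp [Z_conjTranspose]

lemma jwString_anticomm_of_lt {n : ℕ} {i j : Fin n} (hij : i < j)
    {A : Matrix (ZMod 2) (ZMod 2) ℂ} (hA : A * Z + Z * A = 0) (B : Matrix (ZMod 2) (ZMod 2) ℂ) :
    jwString n i A * jwString n j B + jwString n j B * jwString n i A = 0 := by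
  rw [jwString, jwString, tens_mul_add_tens_mul (i := i)]
  · exact tens_eq_zero_of_eq_zero (i := i) (by simp [hij, hA])
  · intro k hk
    rcases lt_or_gt_of_ne hk with hki | hik
    · simp [hki, hki.trans hij]
    · simp [hik.not_gt, Fin.val_ne_of_ne hk]

lemma jwString_anticomm_of_ne {n : ℕ} {i j : Fin n} (hij : i ≠ j)
    {A B : Matrix (ZMod 2) (ZMod 2) ℂ} (hA : A * Z + Z * A = 0) (hB : B * Z + Z * B = 0) :
    jwString n i A * jwString n j B + jwString n j B * jwString n i A = 0 := by
  rcases lt_or_gt_of_ne hij with h | h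
  · exact jwString_anticomm_of_lt h hA B
  · rw [add_comm]
    exact jwString_anticomm_of_lt h hB A

lemma jwString_mul_add_mul_self {n : ℕ} (i : Fin n) (A B : Matrix (ZMod 2) (ZMod 2) ℂ) :
    jwString n i A * jwString n i B + jwString n i B * jwString n i A =
      tens (Function.update 1 i (A * B + B * A)) := by
  rw [jwString, jwString, tens_mul_add_tens_mul (i := i)]
  · congr 1
    funext k
    rcases lt_trichotomy k i with hki | rfl | hik
    · simp [hki, hki.ne, Z_mul_self]
    · simp
    · simp [hik.not_gt, hik.ne', Fin.val_ne_of_ne hik.ne']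
  · intro k hk
    rcases lt_or_gt_of_ne hk with hki | hik
    · simp [hki]
    · simp [hik.not_gt, Fin.val_ne_of_ne hk]

theorem jordan_wigner_canonical_anticommutation_general (n : ℕ) :
    (∀ i j : Fin n, ann n i * ann n j + ann n j * ann n i = 0) ∧
    (∀ i j : Fin n, (ann n i)ᴴ * ann n j + ann n j * (ann n i)ᴴ =
      if i = j then (1 : Matrix (Fin n → ZMod 2) (Fin n → ZMod 2) ℂ) else 0) := by
  simp only [ann_eq_jwString, jwString_conjTranspose]
  constructor
  · intro i j
    rcases eq_or_ne i j with rfl | hij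
    · rw [jwString_mul_add_mul_self, σm_mul_self, add_zero]
      exact tens_eq_zero_of_eq_zero (i := i) (by simp)
    · exact jwString_anticomm_of_ne hij σm_mul_Z_add_Z_mul_σm σm_mul_Z_add_Z_mul_σm
  · intro i j
    split_ifs with hij
    · subst hij
      rw [jwString_mul_add_mul_self, σm_conjTranspose_mul_σm_add_σm_mul_σm_conjTranspose]
      exact (congrArg tens (Function.update_eq_self i 1)).trans tens_one
    · exact jwString_anticomm_of_ne hij σm_conjTranspose_mul_Z_add_Z_mul_σm_conjTranspose
        σm_mul_Z_add_Z_mul_σm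

/-- the Jordan–Wigner annihilation operators satisfy the canonical
anticommutation relations `a_i a_j + a_j a_i = 0` and `a_i† a_j + a_j a_i† = δ_{ij} I`. -/
theorem jordan_wigner_canonical_anticommutation (n : ℕ) (hn : 1 ≤ n) :
    (∀ i j : Fin n, ann n i * ann n j + ann n j * ann n i = 0) ∧
    (∀ i j : Fin n, (ann n i)ᴴ * ann n j + ann n j * (ann n i)ᴴ =
      if i = j then (1 : Matrix (Fin n → ZMod 2) (Fin n → ZMod 2) ℂ) else 0) :=
  jordan_wigner_canonical_anticommutation_general n

end FQ
end

section
/- Let n ≥ 1 and let U be an invertible n × n matrix over the field 𝔽₂ = ZMod 2, with F := U⁻¹. Define U(i) := {k : U_{k,i} = 1}, F(i) := {k : F_{i,k} = 1}, P(i) := F(0) △ F(1) △ ⋯ △ F(i−1), and R(i) := P(i) △ F(i). Let m_U be the 2^n × 2^n permutation matrix indexed by vectors f ∈ 𝔽₂ⁿ with m_U e_f = e_{U f}, and let Γ_{2i}, Γ_{2i+1} be the n-qubit Jordan–Wigner Majorana operators Γ_{2i} := Z^{⊗i} ⊗ X ⊗ I^{⊗(n−1−i)}, Γ_{2i+1}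 := Z^{⊗i} ⊗ Y ⊗ I^{⊗(n−1−i)}. Then for each i ∈ {0,…,n−1} there exist fourth roots of unity λ_i, μ_i ∈ {1,−1,i,−i} such that m_U Γ_{2i} m_U† = λ_i · X_{U(i)} Z_{P(i)} and m_U Γ_{2i+1} m_U† = μ_i · X_{U(i)} Z_{R(i)}. -/
/-!
Everything is a Pauli operator `X^x Z^z` on `(𝔽₂)ⁿ`, the matrix with entry `(-1)^(z ⬝ g)` at
`(g + x, g)` and zero elsewhere. Conjugating by the permutation matrix `e_f ↦ e_(U f)` maps
`X^x Z^z` to `X^(U x) Z^(z F)` with `F = U⁻¹`. The Majorana operator `Γ_{2i}` is `X^(e_i) Z^z`,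
where `z` is the indicator vector of `{j < i}`, and `Γ_{2i+1}` is `i • X^(e_i) Z^z'`, where `z'`
is the indicator vector of `{j ≤ i}`. Now `U e_i` is the indicator vector of `U(i)`, and
`z F = F(0) + ⋯ + F(i-1)` is the indicator vector of `P(i)`; likewise `z' F` is the indicator
vector of `R(i) = P(i+1)`. So one can take `λ_i = 1` and `μ_i = i`.
-/

open Matrix Finset
open scoped symmDiff

namespace FQ

/-- The `n`-qubit Jordan–Wigner Majorana operators:
`gamma n (2i) = Z^⊗i ⊗ X ⊗ I^⊗(n-1-i)` and `gamma n (2i+1) = Z^⊗i ⊗ Y ⊗ I^⊗(n-1-i)`. -/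
noncomputable def gamma (n k : ℕ) : Matrix (Fin n → ZMod 2) (Fin n → ZMod 2) ℂ :=
  tens fun j => if (j : ℕ) < k / 2 then Z
    else if (j : ℕ) = k / 2 then (if k % 2 = 0 then X else Y) else 1

/-- The Pauli string `X_S`: Pauli `X` on each tensor factor in `S`, identity elsewhere. -/
noncomputable def Xstr {n : ℕ} (S : Finset (Fin n)) :
    Matrix (Fin n → ZMod 2) (Fin n → ZMod 2) ℂ :=
  tens fun j => if j ∈ S then X else 1

/-- The Pauli string `Y_S`: Pauli `Y` on each tensor factor in `S`, identity elsewhere. -/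
noncomputable def Ystr {n : ℕ} (S : Finset (Fin n)) :
    Matrix (Fin n → ZMod 2) (Fin n → ZMod 2) ℂ :=
  tens fun j => if j ∈ S then Y else 1

/-- The Pauli string `Z_S`: Pauli `Z` on each tensor factor in `S`, identity elsewhere. -/
noncomputable def Zstr {n : ℕ} (S : Finset (Fin n)) :
    Matrix (Fin n → ZMod 2) (Fin n → ZMod 2) ℂ :=
  tens fun j => if j ∈ S then Z else 1

/-- The `2^n × 2^n` permutation matrix `m_U` of the linear encoding determined by
`U ∈ GL_n(𝔽₂)`, sending the basis vector `e_f` to `e_{U f}`. -/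
noncomputable def encMat {n : ℕ} (U : Matrix (Fin n) (Fin n) (ZMod 2)) :
    Matrix (Fin n → ZMod 2) (Fin n → ZMod 2) ℂ :=
  Matrix.of fun g f => if g = U.mulVec f then 1 else 0

/-- `U(i) = {k : U_{k,i} = 1}`, the set of row indices of nonzero elements of the `i`-th
column of `U`. -/
def colSet {n : ℕ} (U : Matrix (Fin n) (Fin n) (ZMod 2)) (i : Fin n) : Finset (Fin n) :=
  Finset.univ.filter fun k => U k i = 1

/-- `F(i) = {k : F_{i,k} = 1}`, the set of column indices of nonzero elements of the `i`-th
row of `F`. -/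
def rowSet {n : ℕ} (F : Matrix (Fin n) (Fin n) (ZMod 2)) (i : Fin n) : Finset (Fin n) :=
  Finset.univ.filter fun k => F i k = 1

/-- `rowSet` with a natural-number index (junk value `∅` out of range). -/
def rowSetN {n : ℕ} (F : Matrix (Fin n) (Fin n) (ZMod 2)) (i : ℕ) : Finset (Fin n) :=
  if h : i < n then rowSet F ⟨i, h⟩ else ∅

/-- `P(i) = F(0) △ F(1) △ ⋯ △ F(i−1)`, the iterated symmetric difference of the rows of `F`. -/
def Pset {n : ℕ} (F : Matrix (Fin n) (Fin n) (ZMod 2)) : ℕ → Finset (Fin n)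
  | 0 => ∅
  | i + 1 => Pset F i ∆ rowSetN F i

/-- `R(i) = P(i) △ F(i)`. -/
def Rset {n : ℕ} (F : Matrix (Fin n) (Fin n) (ZMod 2)) (i : ℕ) : Finset (Fin n) :=
  Pset F i ∆ rowSetN F i

lemma _root_.AddChar.map_sum_eq_prod {ι A M : Type*} [AddCommMonoid A] [CommMonoid M]
    (ψ : AddChar A M) (s : Finset ι) (f : ι → A) : ψ (∑ i ∈ s, f i) = ∏ i ∈ s, ψ (f i) := by
  induction s using Finset.cons_induction with
  | empty => simp
  | cons a s _ ih => rw [sum_cons, prod_cons, AddChar.map_add_eq_mul, ih]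

/-- The character `a ↦ (-1)^a` of `𝔽₂`. -/
noncomputable def signChar : AddChar (ZMod 2) ℂ :=
  AddChar.zmodChar 2 (show (-1 : ℂ) ^ 2 = 1 by norm_num)

lemma signChar_one : signChar 1 = -1 := by
  rw [signChar, AddChar.zmodChar_apply, show ZMod.val (1 : ZMod 2) = 1 from rfl, pow_one]

lemma zmod_two_eq_zero_or_one : ∀ a : ZMod 2, a = 0 ∨ a = 1 := by decide

noncomputable def qubitPauli (x z : ZMod 2) : Matrix (ZMod 2) (ZMod 2) ℂ :=
  of fun a b => if a = b + x then signChar (z * b) else 0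

lemma X_eq_qubitPauli : X = qubitPauli 1 0 := by
  ext a b
  rcases zmod_two_eq_zero_or_one a with rfl | rfl <;>
    rcases zmod_two_eq_zero_or_one b with rfl | rfl <;>
    simp [qubitPauli, CharTwo.add_self_eq_zero] <;> rfl

lemma Y_eq_qubitPauli : Y = Complex.I • qubitPauli 1 1 := by
  ext a b
  rcases zmod_two_eq_zero_or_one a with rfl | rfl <;>
    rcases zmod_two_eq_zero_or_one b with rfl | rfl <;>
    simp [qubitPauli, signChar_one, CharTwo.add_self_eq_zero] <;> rfl

lemma Z_eq_qubitPauli : Z = qubitPauli 0 1 := by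
  ext a b
  rcases zmod_two_eq_zero_or_one a with rfl | rfl <;>
    rcases zmod_two_eq_zero_or_one b with rfl | rfl <;>
    simp [qubitPauli, signChar_one] <;> rfl

lemma one_eq_qubitPauli : (1 : Matrix (ZMod 2) (ZMod 2) ℂ) = qubitPauli 0 0 := by
  ext a b
  simp [qubitPauli, one_apply]

section Pauli

variable {ι : Type*} [Fintype ι] [DecidableEq ι]

/-- The Pauli operator `X^x Z^z`, sending `e_g` to `(-1)^(z ⬝ g) e_(g + x)`. -/
noncomputable def pauli (x z : ι → ZMod 2) : Matrix (ι → ZMod 2) (ι → ZMod 2) ℂ :=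
  of fun f g => if f = g + x then signChar (z ⬝ᵥ g) else 0

lemma pauli_mul_pauli (x z x' z' : ι → ZMod 2) :
    pauli x z * pauli x' z' = signChar (z ⬝ᵥ x') • pauli (x + x') (z + z') := by
  ext f g
  rw [mul_apply, Finset.sum_eq_single (g + x')]
  · simp only [pauli, of_apply, Matrix.smul_apply, smul_eq_mul, if_true, ← add_assoc,
      add_dotProduct, dotProduct_add, AddChar.map_add_eq_mul, add_right_comm g x' x]
    split_ifs <;> ring
  · intro h _ hne
    simp [pauli, hne]
  · simp

lemma pauli_submatrix_mulVec {F U : Matrix ι ι (ZMod 2)} (hUF : U * F = 1) (hFU : F * U = 1)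
    (x z : ι → ZMod 2) :
    (pauli x z).submatrix (F *ᵥ ·) (F *ᵥ ·) = pauli (U *ᵥ x) (z ᵥ* F) := by
  ext f g
  have hinj : Function.Injective (F *ᵥ ·) := fun a b h => by
    simpa [mulVec_mulVec, hUF] using congrArg (U *ᵥ ·) h
  have hcond : F *ᵥ f = F *ᵥ g + x ↔ f = g + U *ᵥ x := by
    have hx : F *ᵥ g + x = F *ᵥ (g + U *ᵥ x) := by
      rw [mulVec_add, mulVec_mulVec, hFU, one_mulVec]
    rw [hx, hinj.eq_iff]
  simp only [pauli, submatrix_apply, of_apply, hcond, dotProduct_mulVec]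

end Pauli

lemma tens_smul_qubitPauli {n : ℕ} (c : Fin n → ℂ) (x z : Fin n → ZMod 2) :
    tens (fun j => c j • qubitPauli (x j) (z j)) = (∏ j, c j) • pauli x z := by
  ext f g
  simp only [tens, pauli, qubitPauli, smul_of, of_apply, Pi.smul_apply, smul_eq_mul]
  by_cases h : f = g + x
  · simp only [h, Pi.add_apply, if_true]
    rw [dotProduct, AddChar.map_sum_eq_prod, prod_mul_distrib]
  · obtain ⟨j, hj : f j ≠ g j + x j⟩ := Function.ne_iff.mp h
    simp only [h, if_false, mul_zero]
    exact prod_eq_zero (mem_univ j) (by rw [if_neg hj, mul_zero])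

lemma tens_qubitPauli {n : ℕ} (x z : Fin n → ZMod 2) :
    tens (fun j => qubitPauli (x j) (z j)) = pauli x z := by
  simpa using tens_smul_qubitPauli 1 x z

def charVec {ι : Type*} [DecidableEq ι] (S : Finset ι) : ι → ZMod 2 :=
  fun k => if k ∈ S then 1 else 0

section CharVec

variable {ι : Type*} [DecidableEq ι]

@[simp]
lemma charVec_empty : charVec (∅ : Finset ι) = 0 := by
  ext k; simp [charVec]

lemma charVec_singleton (k : ι) : charVec {k} = Pi.single k 1 := by
  ext j
  simp [charVec, Pi.single_apply]

lemma charVec_symmDiff (S T : Finset ι) : charVec (S ∆ T) = charVec S + charVec T := by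
  ext k
  by_cases hS : k ∈ S <;> by_cases hT : k ∈ T <;>
    simp [charVec, mem_symmDiff, hS, hT, CharTwo.add_self_eq_zero]

lemma charVec_filter_eq_one [Fintype ι] (v : ι → ZMod 2) :
    charVec (univ.filter fun k => v k = 1) = v := by
  ext k
  rcases zmod_two_eq_zero_or_one (v k) with h | h <;> simp [charVec, h]

end CharVec

lemma Xstr_eq_pauli {n : ℕ} (S : Finset (Fin n)) : Xstr S = pauli (charVec S) 0 := by
  rw [Xstr, ← tens_qubitPauli]
  congr 1
  ext1 j
  by_cases hj : j ∈ S <;> simp [charVec, hj, X_eq_qubitPauli, one_eq_qubitPauli]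

lemma Zstr_eq_pauli {n : ℕ} (T : Finset (Fin n)) : Zstr T = pauli 0 (charVec T) := by
  rw [Zstr, ← tens_qubitPauli]
  congr 1
  ext1 j
  by_cases hj : j ∈ T <;> simp [charVec, hj, Z_eq_qubitPauli, one_eq_qubitPauli]

lemma Xstr_mul_Zstr {n : ℕ} (S T : Finset (Fin n)) :
    Xstr S * Zstr T = pauli (charVec S) (charVec T) := by
  rw [Xstr_eq_pauli, Zstr_eq_pauli, pauli_mul_pauli]
  simp

lemma gamma_two_mul {n : ℕ} (i : Fin n) :
    gamma n (2 * i) =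
      pauli (Pi.single i 1) (charVec (univ.filter fun j : Fin n => (j : ℕ) < i)) := by
  rw [gamma, ← tens_qubitPauli, Nat.mul_div_cancel_left _ two_pos, Nat.mul_mod_right]
  congr 1
  ext1 j
  rcases lt_trichotomy j i with hj | rfl | hj
  · simp [charVec, hj, hj.ne, Z_eq_qubitPauli]
  · simp [charVec, X_eq_qubitPauli]
  · simp [charVec, hj.ne', Fin.val_ne_of_ne hj.ne', hj.not_gt, one_eq_qubitPauli]

lemma gamma_two_mul_add_one {n : ℕ} (i : Fin n) :
    gamma n (2 * i + 1) = Complex.I •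
      pauli (Pi.single i 1) (charVec (univ.filter fun j : Fin n => (j : ℕ) < i + 1)) := by
  have hprod : ∏ j : Fin n, (if j = i then Complex.I else 1) = Complex.I := by simp
  rw [gamma, ← hprod, ← tens_smul_qubitPauli]
  congr 1
  ext1 j
  have hdiv : (2 * (i : ℕ) + 1) / 2 = i := by omega
  have hmod : (2 * (i : ℕ) + 1) % 2 = 1 := by omega
  rw [hdiv, hmod]
  rcases lt_trichotomy j i with hj | rfl | hj
  · simp [charVec, hj, hj.ne, hj.le, Z_eq_qubitPauli]
  · simp [charVec, Y_eq_qubitPauli]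
  · simp [charVec, hj.ne', Fin.val_ne_of_ne hj.ne', hj.not_gt, hj.not_ge, one_eq_qubitPauli]

noncomputable def mulVecPerm {ι R : Type*} [Fintype ι] [DecidableEq ι] [CommRing R]
    {U : Matrix ι ι R} (hU : IsUnit U) : Equiv.Perm (ι → R) where
  toFun := (U *ᵥ ·)
  invFun := (U⁻¹ *ᵥ ·)
  left_inv f := by
    simp [mulVec_mulVec, nonsing_inv_mul U ((isUnit_iff_isUnit_det U).mp hU)]
  right_inv f := by
    simp [mulVec_mulVec, mul_nonsing_inv U ((isUnit_iff_isUnit_det U).mp hU)]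

lemma encMat_eq_permMatrix {n : ℕ} {U : Matrix (Fin n) (Fin n) (ZMod 2)} (hU : IsUnit U) :
    encMat U = (mulVecPerm hU)⁻¹.permMatrix ℂ := by
  ext g f
  simp only [encMat, of_apply, PEquiv.toMatrix_apply, Equiv.toPEquiv_apply, Option.mem_def,
    Option.some_inj, Equiv.Perm.inv_def, ← Equiv.eq_symm_apply, Equiv.symm_symm]
  rfl

lemma encMat_mul_mul_conjTranspose {n : ℕ} {U : Matrix (Fin n) (Fin n) (ZMod 2)}
    (hU : IsUnit U) (A : Matrix (Fin n → ZMod 2) (Fin n → ZMod 2) ℂ) :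
    encMat U * A * (encMat U)ᴴ = A.submatrix (U⁻¹ *ᵥ ·) (U⁻¹ *ᵥ ·) := by
  rw [encMat_eq_permMatrix hU, conjTranspose_permMatrix, PEquiv.toMatrix_toPEquiv_mul,
    PEquiv.mul_toMatrix_toPEquiv, submatrix_submatrix]
  rfl

lemma charVec_rowSetN {n : ℕ} (F : Matrix (Fin n) (Fin n) (ZMod 2)) (m : ℕ) :
    charVec (rowSetN F m) = charVec (univ.filter fun j : Fin n => (j : ℕ) = m) ᵥ* F := by
  unfold rowSetN
  split_ifs with h
  · have hm : (univ.filter fun j : Fin n => (j : ℕ) = m) = {⟨m, h⟩} := by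
      ext j
      simp [Fin.ext_iff]
    rw [hm, charVec_singleton, single_vecMul, rowSet, charVec_filter_eq_one, one_smul]
    rfl
  · have hm : (univ.filter fun j : Fin n => (j : ℕ) = m) = ∅ :=
      filter_eq_empty_iff.mpr fun j _ hj => h (hj ▸ j.isLt)
    simp [hm]

lemma charVec_Pset {n : ℕ} (F : Matrix (Fin n) (Fin n) (ZMod 2)) (m : ℕ) :
    charVec (Pset F m) = charVec (univ.filter fun j : Fin n => (j : ℕ) < m) ᵥ* F := by
  induction m with
  | zero => simp [Pset]
  | succ m ih =>
    have hlt : (univ.filter fun j : Fin n => (j : ℕ) < m + 1) =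
        (univ.filter fun j : Fin n => (j : ℕ) < m) ∆
          (univ.filter fun j : Fin n => (j : ℕ) = m) := by
      ext j
      simp only [mem_symmDiff, mem_filter, mem_univ, true_and]
      omega
    rw [Pset, charVec_symmDiff, ih, charVec_rowSetN, hlt, charVec_symmDiff, add_vecMul]

lemma Rset_eq_Pset_succ {n : ℕ} (F : Matrix (Fin n) (Fin n) (ZMod 2)) (i : ℕ) :
    Rset F i = Pset F (i + 1) :=
  rfl

lemma charVec_colSet {n : ℕ} (U : Matrix (Fin n) (Fin n) (ZMod 2)) (i : Fin n) :
    charVec (colSet U i) = U *ᵥ Pi.single i 1 := by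
  rw [colSet, charVec_filter_eq_one]
  ext k
  simp [mulVec_single]

theorem linear_encoding_majorana_representation_general (n : ℕ)
    (U : Matrix (Fin n) (Fin n) (ZMod 2)) (hU : IsUnit U) :
    ∀ i : Fin n, ∃ lam mu : ℂ,
      lam ∈ ({1, -1, Complex.I, -Complex.I} : Set ℂ) ∧
      mu ∈ ({1, -1, Complex.I, -Complex.I} : Set ℂ) ∧
      encMat U * gamma n (2 * (i : ℕ)) * (encMat U)ᴴ =
        lam • (Xstr (colSet U i) * Zstr (Pset U⁻¹ (i : ℕ))) ∧
      encMat U * gamma n (2 * (i : ℕ) + 1) * (encMat U)ᴴ =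
        mu • (Xstr (colSet U i) * Zstr (Rset U⁻¹ (i : ℕ))) := by
  intro i
  have hdet := (isUnit_iff_isUnit_det U).mp hU
  have conj_pauli := pauli_submatrix_mulVec (mul_nonsing_inv U hdet) (nonsing_inv_mul U hdet)
  refine ⟨1, Complex.I, by simp, by simp, ?_, ?_⟩
  · rw [gamma_two_mul, encMat_mul_mul_conjTranspose hU, conj_pauli, ← charVec_Pset,
      ← charVec_colSet, Xstr_mul_Zstr, one_smul]
  · rw [gamma_two_mul_add_one, encMat_mul_mul_conjTranspose hU, submatrix_smul, Pi.smul_apply,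
      Pi.smul_apply, conj_pauli, Rset_eq_Pset_succ, ← charVec_Pset, ← charVec_colSet,
      Xstr_mul_Zstr]

/-- conjugating the Jordan–Wigner Majorana operators by the permutation matrix
`m_U` of a linear encoding `U ∈ GL_n(𝔽₂)` yields, up to fourth roots of unity, the Pauli
strings `X_{U(i)} Z_{P(i)}` and `X_{U(i)} Z_{R(i)}`, where `F = U⁻¹`,
`P(i) = F(0) △ ⋯ △ F(i−1)` and `R(i) = P(i) △ F(i)`. -/
theorem linear_encoding_majorana_representation (n : ℕ) (hn : 1 ≤ n)
    (U : Matrix (Fin n) (Fin n) (ZMod 2)) (hU : IsUnit U) :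
    ∀ i : Fin n, ∃ lam mu : ℂ,
      lam ∈ ({1, -1, Complex.I, -Complex.I} : Set ℂ) ∧
      mu ∈ ({1, -1, Complex.I, -Complex.I} : Set ℂ) ∧
      encMat U * gamma n (2 * (i : ℕ)) * (encMat U)ᴴ =
        lam • (Xstr (colSet U i) * Zstr (Pset U⁻¹ (i : ℕ))) ∧
      encMat U * gamma n (2 * (i : ℕ) + 1) * (encMat U)ᴴ =
        mu • (Xstr (colSet U i) * Zstr (Rset U⁻¹ (i : ℕ))) :=
  linear_encoding_majorana_representation_general n U hU

end FQ
end

section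
/- Let n ≥ 1, let Γ_0,…,Γ_{2n−1} be the n-qubit Jordan–Wigner Majorana operators (Γ_{2i} := Z^{⊗i} ⊗ X ⊗ I^{⊗(n−1−i)}, Γ_{2i+1} := Z^{⊗i} ⊗ Y ⊗ I^{⊗(n−1−i)}), let I ⊆ {0,…,n−1}, and on (ℂ²)^{⊗(n+1)} define S := Z_I ⊗ Z and μ_k := Γ_k ⊗ X if ⌊k/2⌋ ∈ I, μ_k := Γ_k ⊗ I₂ otherwise. Then there exists a linear isometry V : ℂ^{2^n} → ℂ^{2^{n+1}} (i.e. V† V = I_{2^n}) such that V V† = ½(I + S) and μ_k V = V Γ_k for every k ∈ {0,…,2n−1}. In particular, the +1 eigenspace of S has dimension 2^n, is invariant under every μ_k, and on it the μ_k realize a copy of the Jordan–Wigner Majorana operators. -/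
open Matrix Finset
open scoped symmDiff

namespace FQ

/-- The operator `A ⊗ M` on `(ℂ²)^⊗(n+1)`: `A` on the first `n` qubits and the single-qubit
operator `M` on the ancilla qubit. -/
noncomputable def extend {n : ℕ} (A : Matrix (Fin n → ZMod 2) (Fin n → ZMod 2) ℂ)
    (M : Matrix (ZMod 2) (ZMod 2) ℂ) :
    Matrix (Fin (n + 1) → ZMod 2) (Fin (n + 1) → ZMod 2) ℂ :=
  Matrix.of fun f g =>
    A (fun j => f j.castSucc) (fun j => g j.castSucc) * M (f (Fin.last n)) (g (Fin.last n))

/-- The stabilizer `S = Z_I ⊗ Z` on `(ℂ²)^⊗(n+1)`: Pauli `Z` on each qubit in `I`, identity on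
the other first-`n` qubits, and `Z` on the ancilla. -/
noncomputable def stab (n : ℕ) (I : Finset (Fin n)) :
    Matrix (Fin (n + 1) → ZMod 2) (Fin (n + 1) → ZMod 2) ℂ :=
  extend (Zstr I) Z

/-- The modified Majorana operators `μ_k = Γ_k ⊗ X` if `⌊k/2⌋ ∈ I` and `μ_k = Γ_k ⊗ I₂`
otherwise. -/
noncomputable def mu (n : ℕ) (I : Finset (Fin n)) (k : ℕ) :
    Matrix (Fin (n + 1) → ZMod 2) (Fin (n + 1) → ZMod 2) ℂ :=
  if h : k / 2 < n then
    (if (⟨k / 2, h⟩ : Fin n) ∈ I then extend (gamma n k) X else extend (gamma n k) 1)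
  else extend (gamma n k) 1

end FQ

/-
The isometry sends the basis vector |g⟩ to |g, ⊕_{i∈I} g_i⟩, i.e. it records the I-parity of g on
the ancilla. In the computational basis `S = Z_I ⊗ Z` is diagonal with entries `(-1)^(⊕_I g_i + a)`,
so `½(1 + S)` is the projector onto exactly these basis vectors. Each `Γ_k` maps basis vectors to
multiples of basis vectors, flipping only bit `⌊k/2⌋`; this changes the I-parity precisely when
`⌊k/2⌋ ∈ I`, and then the ancilla factor `X` of `μ_k` flips the recorded parity along with it.
-/

namespace Matrix

theorem conjTranspose_submatrix_one_mul_self {l m α : Type*} [Fintype m] [DecidableEq l]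
    [DecidableEq m] [Semiring α] [StarRing α] {e : l → m} (he : Function.Injective e) :
    ((1 : Matrix m m α).submatrix id e)ᴴ * (1 : Matrix m m α).submatrix id e = 1 := by
  rw [conjTranspose_submatrix, conjTranspose_one, ← submatrix_mul _ _ _ _ _ Function.bijective_id,
    mul_one, submatrix_one e he]

theorem submatrix_one_mul_conjTranspose_self {l m α : Type*} [Fintype l] [DecidableEq m]
    [Semiring α] [StarRing α] {e : l → m} (he : Function.Injective e) :
    (1 : Matrix m m α).submatrix id e * ((1 : Matrix m m α).submatrix id e)ᴴ =
      diagonal ((Set.range e).indicator 1) := by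
  ext i i'
  rw [mul_apply]
  by_cases hi : i ∈ Set.range e
  · obtain ⟨j, rfl⟩ := hi
    rw [Finset.sum_eq_single j]
    · by_cases h : i' = e j <;> simp [one_apply, eq_comm, h]
    · intro k _ hk
      simp [one_apply, he.ne hk.symm]
    · simp
  · have hzero : ∀ k, (1 : Matrix m m α).submatrix id e i k = 0 := fun k =>
      one_apply_ne fun h => hi ⟨k, h.symm⟩
    simp only [hzero, zero_mul, sum_const_zero]
    simp [diagonal_apply, hi]

theorem mul_submatrix_one_eq_submatrix_one_mul {l m α : Type*} [Fintype l] [Fintype m]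
    [DecidableEq l] [DecidableEq m] [Semiring α] {e : l → m} (he : Function.Injective e)
    {A : Matrix l l α} {B : Matrix m m α} (hB : ∀ i j, i ∉ Set.range e → B i (e j) = 0)
    (hA : B.submatrix e e = A) :
    B * (1 : Matrix m m α).submatrix id e = (1 : Matrix m m α).submatrix id e * A := by
  have hBV : B * (1 : Matrix m m α).submatrix id e = B.submatrix id e := by
    simpa using mul_submatrix_one (Equiv.refl m) e B
  rw [hBV, ← hA]
  ext i j
  by_cases hi : i ∈ Set.range e
  · obtain ⟨k, rfl⟩ := hi
    simp [mul_apply, one_apply, he.eq_iff]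
  · have hi' : ∀ k, i ≠ e k := fun k h => hi ⟨k, h.symm⟩
    simp [mul_apply, hB i j hi, hi']

end Matrix

namespace FQ

lemma zmod_two_cases (x : ZMod 2) : x = 0 ∨ x = 1 := by revert x; decide

def paritySign (x : ZMod 2) : ℂ := if x = 0 then 1 else -1

lemma paritySign_add (x y : ZMod 2) : paritySign (x + y) = paritySign x * paritySign y := by
  rcases zmod_two_cases x with rfl | rfl <;> rcases zmod_two_cases y with rfl | rfl <;>
    simp [paritySign, show (1 + 1 : ZMod 2) = 0 from rfl]

lemma prod_paritySign {ι : Type*} (s : Finset ι) (a : ι → ZMod 2) :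
    ∏ i ∈ s, paritySign (a i) = paritySign (∑ i ∈ s, a i) := by
  induction s using Finset.cons_induction with
  | empty => simp [paritySign]
  | cons i s hi ih => rw [prod_cons, sum_cons, paritySign_add, ih]

lemma half_one_add_paritySign (x : ZMod 2) :
    (1 / 2 : ℂ) * (1 + paritySign x) = if x = 0 then 1 else 0 := by
  rcases zmod_two_cases x with rfl | rfl <;> norm_num [paritySign]

lemma Z_eq_diagonal : Z = diagonal paritySign := by
  ext a b
  rcases zmod_two_cases a with rfl | rfl <;> rcases zmod_two_cases b with rfl | rfl <;>
    simp [Z, paritySign] <;> rfl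

lemma X_apply (a b : ZMod 2) : X a b = if a = b + 1 then 1 else 0 := by
  rcases zmod_two_cases a with rfl | rfl <;> rcases zmod_two_cases b with rfl | rfl <;>
    simp [X] <;> rfl

lemma eq_add_one_of_Y_apply_ne_zero {a b : ZMod 2} (h : Y a b ≠ 0) : a = b + 1 := by
  rcases zmod_two_cases a with rfl | rfl <;> rcases zmod_two_cases b with rfl | rfl <;>
    first | rfl | exact absurd rfl h

lemma tens_diagonal {n : ℕ} (d : Fin n → ZMod 2 → ℂ) :
    tens (fun i => diagonal (d i)) = diagonal fun f => ∏ i, d i (f i) := by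
  ext f g
  by_cases hfg : f = g
  · simp [tens, hfg]
  · obtain ⟨i, hi⟩ := Function.ne_iff.mp hfg
    simp only [tens, of_apply, diagonal_apply, hfg, if_false]
    exact prod_eq_zero (mem_univ i) (if_neg hi)

lemma apply_ne_zero_of_tens_apply_ne_zero {n : ℕ} {M : Fin n → Matrix (ZMod 2) (ZMod 2) ℂ}
    {a b : Fin n → ZMod 2} (h : tens M a b ≠ 0) (i : Fin n) : M i (a i) (b i) ≠ 0 := by
  rw [tens, of_apply] at h
  exact prod_ne_zero_iff.mp h i (mem_univ i)

lemma extend_apply {n : ℕ} (A : Matrix (Fin n → ZMod 2) (Fin n → ZMod 2) ℂ)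
    (M : Matrix (ZMod 2) (ZMod 2) ℂ) (f g : Fin (n + 1) → ZMod 2) :
    extend A M f g = A (Fin.init f) (Fin.init g) * M (f (Fin.last n)) (g (Fin.last n)) :=
  rfl

lemma extend_diagonal {n : ℕ} (d : (Fin n → ZMod 2) → ℂ) (d' : ZMod 2 → ℂ) :
    extend (diagonal d) (diagonal d') =
      diagonal fun f => d (Fin.init f) * d' (f (Fin.last n)) := by
  ext f g
  rw [extend_apply]
  by_cases hfg : f = g
  · simp [hfg]
  · have : Fin.init f ≠ Fin.init g ∨ f (Fin.last n) ≠ g (Fin.last n) := by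
      by_contra! h
      exact hfg (by rw [← Fin.snoc_init_self f, ← Fin.snoc_init_self g, h.1, h.2])
    rcases this with h | h <;> simp [diagonal_apply_ne _ h, hfg]

lemma Zstr_eq_diagonal {n : ℕ} (I : Finset (Fin n)) :
    Zstr I = diagonal fun a => paritySign (∑ i ∈ I, a i) := by
  have h : (fun j => if j ∈ I then Z else 1) =
      fun j => diagonal (if j ∈ I then paritySign else 1) := by
    ext1 j; split_ifs <;> simp [Z_eq_diagonal]
  rw [Zstr, h, tens_diagonal]
  congr 1; ext a
  have hfactor : ∀ i, (if i ∈ I then paritySign else 1) (a i) =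
      if i ∈ I then paritySign (a i) else 1 := fun i => by split_ifs <;> rfl
  rw [prod_congr rfl fun i _ => hfactor i, prod_ite_mem, univ_inter, prod_paritySign]

def snocParity {n : ℕ} (I : Finset (Fin n)) (g : Fin n → ZMod 2) : Fin (n + 1) → ZMod 2 :=
  Fin.snoc g (∑ i ∈ I, g i)

def parityIsometry {n : ℕ} (I : Finset (Fin n)) :
    Matrix (Fin (n + 1) → ZMod 2) (Fin n → ZMod 2) ℂ :=
  (1 : Matrix _ _ ℂ).submatrix id (snocParity I)

lemma init_snocParity {n : ℕ} (I : Finset (Fin n)) (g : Fin n → ZMod 2) :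
    Fin.init (snocParity I g) = g :=
  Fin.init_snoc _ _

lemma snocParity_last {n : ℕ} (I : Finset (Fin n)) (g : Fin n → ZMod 2) :
    snocParity I g (Fin.last n) = ∑ i ∈ I, g i :=
  Fin.snoc_last _ _

lemma snocParity_injective {n : ℕ} (I : Finset (Fin n)) : Function.Injective (snocParity I) :=
  fun g g' h => by rw [← init_snocParity I g, h, init_snocParity]

lemma mem_range_snocParity {n : ℕ} (I : Finset (Fin n)) (f : Fin (n + 1) → ZMod 2) :
    f ∈ Set.range (snocParity I) ↔ f (Fin.last n) = ∑ i ∈ I, Fin.init f i := by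
  constructor
  · rintro ⟨g, rfl⟩
    rw [snocParity_last, init_snocParity]
  · intro h
    exact ⟨Fin.init f, by rw [snocParity, ← h, Fin.snoc_init_self]⟩

lemma stab_eq_diagonal (n : ℕ) (I : Finset (Fin n)) :
    stab n I = diagonal fun f => paritySign (∑ i ∈ I, Fin.init f i + f (Fin.last n)) := by
  simp only [stab, Zstr_eq_diagonal, Z_eq_diagonal, extend_diagonal, paritySign_add]

lemma half_smul_one_add_stab (n : ℕ) (I : Finset (Fin n)) :
    (1 / 2 : ℂ) • (1 + stab n I) = diagonal ((Set.range (snocParity I)).indicator 1) := by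
  rw [stab_eq_diagonal, ← diagonal_one, diagonal_add, ← diagonal_smul]
  congr 1; ext f
  simp only [Pi.smul_apply, smul_eq_mul, half_one_add_paritySign, CharTwo.add_eq_zero,
    Set.indicator_apply, mem_range_snocParity, Pi.one_apply]
  exact if_congr eq_comm rfl rfl

lemma extend_mul_parityIsometry {n : ℕ} (I : Finset (Fin n))
    {A : Matrix (Fin n → ZMod 2) (Fin n → ZMod 2) ℂ} {M : Matrix (ZMod 2) (ZMod 2) ℂ}
    {c : ZMod 2} (hA : ∀ a b, A a b ≠ 0 → ∑ i ∈ I, a i = ∑ i ∈ I, b i + c)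
    (hM : ∀ x y, M x y = if x = y + c then 1 else 0) :
    extend A M * parityIsometry I = parityIsometry I * A := by
  refine mul_submatrix_one_eq_submatrix_one_mul (snocParity_injective I) ?_ ?_
  · intro f g hf
    rw [mem_range_snocParity] at hf
    rw [extend_apply, init_snocParity, snocParity_last, hM]
    by_cases hAfg : A (Fin.init f) g = 0
    · rw [hAfg, zero_mul]
    · rw [← hA _ _ hAfg, if_neg hf, mul_zero]
  · ext a b
    rw [submatrix_apply, extend_apply, init_snocParity, init_snocParity, snocParity_last,
      snocParity_last, hM]
    by_cases hAab : A a b = 0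
    · rw [hAab, zero_mul]
    · rw [← hA _ _ hAab, if_pos rfl, mul_one]

lemma gamma_apply_ne_zero {n k : ℕ} (hk : k / 2 < n) {a b : Fin n → ZMod 2}
    (h : gamma n k a b ≠ 0) : a = b + Pi.single ⟨k / 2, hk⟩ 1 := by
  ext j
  have hj := apply_ne_zero_of_tens_apply_ne_zero h j
  rw [Pi.add_apply, Pi.single_apply]
  by_cases hjk : j = ⟨k / 2, hk⟩
  · have hjk' : (j : ℕ) = k / 2 := by rw [hjk]
    rw [if_neg hjk'.not_lt, if_pos hjk'] at hj
    rw [if_pos hjk]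
    split_ifs at hj
    · rw [X_apply] at hj
      exact of_not_not fun hne => hj (if_neg hne)
    · exact eq_add_one_of_Y_apply_ne_zero hj
  · have hjk' : (j : ℕ) ≠ k / 2 := fun h => hjk (Fin.ext h)
    rw [if_neg hjk', apply_ite (fun M : Matrix _ _ ℂ => M (a j) (b j)), Z_eq_diagonal] at hj
    rw [if_neg hjk, add_zero]
    by_contra hne
    split_ifs at hj
    · exact hj (diagonal_apply_ne _ hne)
    · exact hj (one_apply_ne hne)

lemma sum_add_pi_single_one {n : ℕ} (I : Finset (Fin n)) (b : Fin n → ZMod 2) (m : Fin n) :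
    ∑ i ∈ I, (b + Pi.single m 1 : Fin n → ZMod 2) i = ∑ i ∈ I, b i + if m ∈ I then 1 else 0 := by
  rw [← sum_pi_single' m (1 : ZMod 2) I, ← sum_add_distrib]
  rfl

lemma mu_eq_extend {n k : ℕ} (I : Finset (Fin n)) (hk : k / 2 < n) :
    mu n I k = extend (gamma n k) (if (⟨k / 2, hk⟩ : Fin n) ∈ I then X else 1) := by
  rw [mu, dif_pos hk, apply_ite (extend (gamma n k))]

lemma mu_mul_parityIsometry {n k : ℕ} (I : Finset (Fin n)) (hk : k / 2 < n) :
    mu n I k * parityIsometry I = parityIsometry I * gamma n k := by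
  rw [mu_eq_extend I hk]
  refine extend_mul_parityIsometry I (c := if (⟨k / 2, hk⟩ : Fin n) ∈ I then 1 else 0)
    (fun a b hab => by rw [gamma_apply_ne_zero hk hab, sum_add_pi_single_one]) fun x y => ?_
  by_cases hm : (⟨k / 2, hk⟩ : Fin n) ∈ I
  · simp only [hm, if_true]
    exact X_apply x y
  · simp only [hm, if_false, add_zero]
    exact one_apply

theorem ancilla_mapping_exists_general (n : ℕ) (I : Finset (Fin n)) :
    ∃ V : Matrix (Fin (n + 1) → ZMod 2) (Fin n → ZMod 2) ℂ,
      Vᴴ * V = 1 ∧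
      V * Vᴴ = (1 / 2 : ℂ) • (1 + stab n I) ∧
      ∀ k, k < 2 * n → mu n I k * V = V * gamma n k :=
  ⟨parityIsometry I, conjTranspose_submatrix_one_mul_self (snocParity_injective I),
    (submatrix_one_mul_conjTranspose_self (snocParity_injective I)).trans
      (half_smul_one_add_stab n I).symm,
    fun _ hk => mu_mul_parityIsometry I (by omega)⟩

/-- there is a linear isometry `V : ℂ^(2^n) → ℂ^(2^(n+1))` with
`V† V = I`, `V V† = ½(I + S)` (the projector onto the `+1` eigenspace of the stabilizer
`S = Z_I ⊗ Z`), and `μ_k V = V Γ_k` for all `k < 2n`; i.e. the `+1` eigenspace of `S` is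
`2^n`-dimensional, invariant under every `μ_k`, and on it the `μ_k` realize a copy of the
Jordan–Wigner Majorana operators. -/
theorem ancilla_mapping_exists (n : ℕ) (hn : 1 ≤ n) (I : Finset (Fin n)) :
    ∃ V : Matrix (Fin (n + 1) → ZMod 2) (Fin n → ZMod 2) ℂ,
      Vᴴ * V = 1 ∧
      V * Vᴴ = (1 / 2 : ℂ) • (1 + stab n I) ∧
      ∀ k, k < 2 * n → mu n I k * V = V * gamma n k :=
  ancilla_mapping_exists_general n I

end FQ
end

section
/- Let n ≥ 1, let i < j < n be natural numbers, and let I ⊆ Finset.range n. Then, over the integers, |{i, j} ∪ (Ico (i+1) j △ I)| + 1 = (j − i + 1) + d, where d := |I \ Icc i j| − |I ∩ Ico (i+1) j| + 1 and △ denotes symmetric difference of finite sets. (Interpretation: the left side is the Pauli weight — the number of non-identity tensor factors — of the (n+1)-qubit operator obtained by multiplying the Jordan–Wigner hopping string X_{{i}} X_{{j}} Z_{Ico(i+1,j)} ⊗ I₂ by the ancilla operator Z_I ⊗ Y, and d = d_{ij}(I) is the resulting change in Pauli weight relative to the original weight j − i + 1.) -/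
open Finset
open scoped symmDiff

/-- for `1 ≤ n`, `i < j < n` and `I ⊆ {0,…,n−1}`, over the integers,
`|{i,j} ∪ (Ico (i+1) j △ I)| + 1 = (j − i + 1) + d` where
`d = |I \ Icc i j| − |I ∩ Ico (i+1) j| + 1`. The left side is the Pauli weight of the
`(n+1)`-qubit operator obtained by multiplying the Jordan–Wigner hopping string
`X_{i} X_{j} Z_{Ico(i+1,j)} ⊗ I₂` by the ancilla operator `Z_I ⊗ Y`, and `d = d_{ij}(I)` is
the change in Pauli weight relative to the original weight `j − i + 1`. -/
theorem ancilla_pauli_weight_change (n i j : ℕ) (hn : 1 ≤ n) (hij : i < j) (hjn : j < n)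
    (I : Finset ℕ) (hI : I ⊆ Finset.range n) :
    ((({i, j} : Finset ℕ) ∪ (Finset.Ico (i + 1) j ∆ I)).card : ℤ) + 1 =
      ((j : ℤ) - (i : ℤ) + 1) +
        (((I \ Finset.Icc i j).card : ℤ) - ((I ∩ Finset.Ico (i + 1) j).card : ℤ) + 1) := by
  set S := Finset.Ico (i + 1) j with hS
  have hset : ({i, j} : Finset ℕ) ∪ (S ∆ I) =
      (({i, j} ∪ (S \ I)) ∪ (I \ Finset.Icc i j)) := by
    ext x
    by_cases hx : x ∈ I <;>
      simp [hS, symmDiff_def, Finset.mem_Ico, Finset.mem_Icc, hx] <;> omega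
  have hd1 : Disjoint ({i, j} : Finset ℕ) (S \ I) := by
    simp only [Finset.disjoint_left]
    intro x hx hx'
    simp [hS, Finset.mem_Ico] at hx hx'
    omega
  have hd2 : Disjoint (({i, j} : Finset ℕ) ∪ (S \ I)) (I \ Finset.Icc i j) := by
    simp only [Finset.disjoint_left]
    intro x hx hx'
    simp [hS, Finset.mem_Ico, Finset.mem_Icc] at hx hx'
    omega
  have hcard2 : ({i, j} : Finset ℕ).card = 2 := by
    rw [Finset.card_insert_of_notMem (by simp; omega), Finset.card_singleton]
  have h1 : (({i, j} : Finset ℕ) ∪ (S ∆ I)).card =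
      2 + (S \ I).card + (I \ Finset.Icc i j).card := by
    rw [hset, Finset.card_union_of_disjoint hd2, Finset.card_union_of_disjoint hd1, hcard2]
  have h2 : (S \ I).card + (I ∩ S).card = S.card := by
    rw [Finset.inter_comm]
    exact Finset.card_sdiff_add_card_inter S I
  have h3 : S.card = j - (i + 1) := Nat.card_Ico _ _
  rw [h1]
  push_cast
  omega
end
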